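/- Let M be a matroid with weight function μ and let I be a basis. The following are equivalent: (1) I is ε-optimal for M with respect to μ; (2) for every e ∈ S \ I, the set I^{≥ μ(e) − ε} = {x ∈ I : μ(x) ≥ μ(e) − ε} blocks e. -/

import Mathlib

/-!
A base `I` has maximum weight for `w` iff no single exchange `I - x + e` improves it, i.e. iff
`w e ≤ w x` for every `e ∉ I` and every `x` in the fundamental circuit of `e` in `I`; the converse
goes by induction on `|J \ I|`, exchanging a base `J` towards `I` along those circuits.
For `w = μ_{I,ε}` the condition says that the fundamental circuit of `e` lies in
`insert e I^{≥ μ(e) − ε}`, which holds iff `I^{≥ μ(e) − ε}` spans `e`, i.e. blocks it.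
-/

open Matroid Set

variable {α : Type*}

/-- The `ℕ∞`-valued rank of a set `X` in a matroid `M`:
the supremum of the sizes of independent subsets of `X`. -/
noncomputable def Matroid.eRank' (M : Matroid α) (X : Set α) : ℕ∞ :=
  ⨆ I ∈ {I | M.Indep I ∧ I ⊆ X}, I.encard

/-- A set `A` *blocks* an element `e` if adding `e` to `A` does not increase the rank. -/
def Matroid.Blocks (M : Matroid α) (A : Set α) (e : α) : Prop :=
  M.eRank' (insert e A) = M.eRank' A

/-- The total weight of a set of elements. -/
noncomputable def wt (μ : α → ℝ) (I : Set α) : ℝ := ∑ᶠ e ∈ I, μ e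

/-- `I` is a maximum-weight base of `M` with respect to the weight function `μ`. -/
def IsMaxWeightBase (M : Matroid α) (μ : α → ℝ) (I : Set α) : Prop :=
  M.IsBase I ∧ ∀ J, M.IsBase J → wt μ J ≤ wt μ I

/-- The modified cost function `μ_{I,ε}` adding `ε` to the weight of each element of `I`. -/
noncomputable def modCost (μ : α → ℝ) (I : Set α) (ε : ℝ) : α → ℝ :=
  fun e => μ e + I.indicator (fun _ => ε) e

/-- `I` is an `ε`-optimal base of `M` w.r.t. `μ`:
it is a maximum-weight base for the modified cost `μ_{I,ε}`. -/
def EpsOptimal (M : Matroid α) (μ : α → ℝ) (ε : ℝ) (I : Set α) : Prop :=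
  IsMaxWeightBase M (modCost μ I ε) I

/-- Contraction of a matroid, defined by duality: `M ／ C = (M✶ ↾ (M.E \ C))✶`. -/
noncomputable def Matroid.contract' (M : Matroid α) (C : Set α) : Matroid α :=
  (M✶ ↾ (M.E \ C))✶

/-- The weight of a maximum-weight base of `M` with respect to `μ`. -/
noncomputable def OPTval (M : Matroid α) (μ : α → ℝ) : ℝ :=
  sSup ((fun B => wt μ B) '' {B | M.IsBase B})

namespace Matroid

variable {M : Matroid α} {A I J : Set α} {e : α}

lemma eRank'_eq_eRk (M : Matroid α) (X : Set α) : M.eRank' X = M.eRk X := by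
  refine le_antisymm (iSup₂_le fun J hJ ↦ hJ.1.encard_le_eRk_of_subset hJ.2) ?_
  obtain ⟨J, hJ⟩ := M.exists_isBasis' X
  rw [← hJ.encard_eq_eRk]
  exact le_iSup₂_of_le J ⟨hJ.indep, hJ.subset⟩ le_rfl

lemma blocks_iff_mem_closure (hA : M.IsRkFinite A) (he : e ∈ M.E) :
    M.Blocks A e ↔ e ∈ M.closure A := by
  rw [Blocks, eRank'_eq_eRk, eRank'_eq_eRk]
  refine ⟨fun h ↦ by_contra fun hcl ↦ ?_, fun hcl ↦ ?_⟩
  · rw [eRk_insert_eq_add_one ⟨he, hcl⟩] at h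
    exact ((ENat.lt_add_one_iff hA.eRk_lt_top.ne).2 le_rfl).ne' h
  · rw [← eRk_insert_closure_eq, insert_eq_of_mem hcl, eRk_closure_eq]

lemma Indep.fundCircuit_subset_insert_iff (hI : M.Indep I) (hAI : A ⊆ I)
    (he : e ∈ M.closure I) (heI : e ∉ I) :
    M.fundCircuit e I ⊆ insert e A ↔ e ∈ M.closure A := by
  refine ⟨fun h ↦ ?_, fun h ↦ ?_⟩
  · have hC := hI.fundCircuit_isCircuit he heI
    exact M.closure_subset_closure (sdiff_singleton_subset_iff.2 h)
      (hC.mem_closure_sdiff_singleton_of_mem (M.mem_fundCircuit e I))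
  · rw [fundCircuit_eq_sInter he]
    exact insert_subset_insert (sInter_subset_of_mem ⟨hAI, h⟩)

/-- `e` is spanned by its fundamental circuit in `I` but not by `J - e`, so some element `x` of
that circuit escapes the closure of `J - e`. -/
lemma IsBase.exists_mem_fundCircuit_exchange (hI : M.IsBase I) (hJ : M.IsBase J)
    (he : e ∈ J \ I) :
    ∃ x ∈ I \ J, x ∈ M.fundCircuit e I ∧ M.IsBase (insert x (J \ {e})) := by
  have hC := hI.fundCircuit_isCircuit (hJ.subset_ground he.1) he.2
  have hecl := hC.mem_closure_sdiff_singleton_of_mem (M.mem_fundCircuit e I)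
  obtain ⟨x, hxC, hxcl⟩ : ∃ x ∈ M.fundCircuit e I \ {e}, x ∉ M.closure (J \ {e}) := by
    by_contra! h
    exact hJ.indep.notMem_closure_sdiff_of_mem he.1
      (M.closure_subset_closure_of_subset_closure h hecl)
  have hxI : x ∈ I := (M.fundCircuit_subset_insert e I hxC.1).resolve_left hxC.2
  have hxJ : x ∉ J := fun hxJ ↦ hxcl (M.subset_closure _ (hJ.indep.sdiff _).subset_ground
    ⟨hxJ, hxC.2⟩)
  exact ⟨x, ⟨hxI, hxJ⟩, hxC.1,
    hJ.exchange_base_of_notMem_closure he.1 hxcl (hI.subset_ground hxI)⟩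

end Matroid

section MaxWeightBase

variable {M : Matroid α} {w : α → ℝ} {I J : Set α} {e x : α}

lemma wt_insert_sdiff_add (w : α → ℝ) (hJ : J.Finite) (he : e ∈ J) (hx : x ∉ J) :
    wt w (insert x (J \ {e})) + w e = wt w J + w x := by
  have hx' := finsum_mem_insert w (fun h ↦ hx h.1) (hJ.sdiff (t := {e}))
  have he' := finsum_mem_insert w (show e ∉ J \ {e} from fun h ↦ h.2 rfl) (hJ.sdiff (t := {e}))
  rw [insert_sdiff_singleton, insert_eq_of_mem he] at he'
  unfold wt
  linarith

lemma IsMaxWeightBase.le_of_mem_fundCircuit [M.RankFinite] (h : IsMaxWeightBase M w I)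
    (he : e ∈ M.E \ I) (hx : x ∈ M.fundCircuit e I) : w e ≤ w x := by
  obtain rfl | hxe := eq_or_ne x e
  · rfl
  have hxI : x ∈ I := (M.fundCircuit_subset_insert e I hx).resolve_left hxe
  have hindep := (h.1.indep.mem_fundCircuit_iff (h.1.closure_eq ▸ he.1) he.2).1 hx
  have hB := h.1.exchange_isBase_of_indep' hxI he.2 hindep
  rw [← insert_sdiff_singleton_comm hxe.symm] at hB
  have hle := h.2 _ hB
  have hwt := wt_insert_sdiff_add w h.1.finite hxI he.2
  linarith

lemma isMaxWeightBase_of_forall_mem_fundCircuit [M.RankFinite] (hI : M.IsBase I)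
    (h : ∀ e ∈ M.E \ I, ∀ x ∈ M.fundCircuit e I, w e ≤ w x) : IsMaxWeightBase M w I := by
  refine ⟨hI, fun J hJ ↦ ?_⟩
  induction hn : (J \ I).ncard using Nat.strong_induction_on generalizing J with
  | _ n ih =>
  obtain hJI | ⟨e, he⟩ := (J \ I).eq_empty_or_nonempty
  · rw [hJ.eq_of_subset_isBase hI (sdiff_eq_empty.1 hJI)]
  obtain ⟨x, hx, hxC, hB⟩ := hI.exists_mem_fundCircuit_exchange hJ he
  have hlt : (insert x (J \ {e}) \ I).ncard < n := by
    rw [insert_sdiff_of_mem _ hx.1, Set.sdiff_sdiff_comm, ← hn]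
    exact ncard_sdiff_singleton_lt_of_mem he hJ.finite.sdiff
  have hle := ih _ hlt (insert x (J \ {e})) hB rfl
  have hex := h e ⟨hJ.subset_ground he.1, he.2⟩ x hxC
  have hwt := wt_insert_sdiff_add w hJ.finite he.1 hx.2
  linarith

lemma isMaxWeightBase_iff_forall_mem_fundCircuit [M.RankFinite] (hI : M.IsBase I) :
    IsMaxWeightBase M w I ↔ ∀ e ∈ M.E \ I, ∀ x ∈ M.fundCircuit e I, w e ≤ w x :=
  ⟨fun h _ he _ hx ↦ h.le_of_mem_fundCircuit he hx, isMaxWeightBase_of_forall_mem_fundCircuit hI⟩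

end MaxWeightBase

lemma modCost_le_modCost_iff {μ : α → ℝ} {I : Set α} {ε : ℝ} {e x : α} (he : e ∉ I)
    (hx : x ∈ I) : modCost μ I ε e ≤ modCost μ I ε x ↔ μ e - ε ≤ μ x := by
  simp only [modCost, indicator_of_notMem he, indicator_of_mem hx, add_zero]
  exact sub_le_iff_le_add.symm

theorem epsOptimal_iff_blocks_general (M : Matroid α) [M.Finite] (μ : α → ℝ) (ε : ℝ) (I : Set α)
    (hI : M.IsBase I) :
    EpsOptimal M μ ε I ↔ ∀ e ∈ M.E \ I, M.Blocks {x ∈ I | μ e - ε ≤ μ x} e := by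
  rw [EpsOptimal, isMaxWeightBase_iff_forall_mem_fundCircuit hI]
  refine forall₂_congr fun e he ↦ ?_
  have hAI : {x ∈ I | μ e - ε ≤ μ x} ⊆ I := sep_subset _ _
  rw [blocks_iff_mem_closure (M.isRkFinite_of_finite (hI.finite.subset hAI)) he.1,
    ← hI.indep.fundCircuit_subset_insert_iff hAI (hI.closure_eq ▸ he.1) he.2]
  refine forall₂_congr fun x hx ↦ ?_
  obtain rfl | hxe := eq_or_ne x e
  · exact iff_of_true le_rfl (mem_insert x _)
  have hxI : x ∈ I := (M.fundCircuit_subset_insert e I hx).resolve_left hxe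
  rw [modCost_le_modCost_iff he.2 hxI, mem_insert_iff, or_iff_right hxe, mem_sep_iff,
    and_iff_right hxI]

/-- A base `I` is `ε`-optimal iff every `e ∈ S \ I` is blocked by
`I^{≥ μ e − ε}`. -/
theorem epsOptimal_iff_blocks (M : Matroid α) [M.Finite] (μ : α → ℝ)
    (hpos : ∀ e ∈ M.E, 0 < μ e) (ε : ℝ) (hε : 0 < ε)
    (I : Set α) (hI : M.IsBase I) :
    EpsOptimal M μ ε I ↔ ∀ e ∈ M.E \ I, M.Blocks {x ∈ I | μ e - ε ≤ μ x} e :=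
  epsOptimal_iff_blocks_general M μ ε I hI
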